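/- Assume 2 is a non-zero-divisor in k. Then the center of R equals the k-subalgebra of R generated by x₁² and x₂². -/

import Mathlib

/-- The anticommutation relation `x₁x₂ + x₂x₁ = 0` on the free `k`-algebra
on two generators. -/
inductive OddRel (k : Type*) [CommRing k] :
    FreeAlgebra k (Fin 2) → FreeAlgebra k (Fin 2) → Prop
  | anticomm : OddRel k
      (FreeAlgebra.ι k (0 : Fin 2) * FreeAlgebra.ι k (1 : Fin 2) +
        FreeAlgebra.ι k (1 : Fin 2) * FreeAlgebra.ι k (0 : Fin 2)) 0

/-- The `k`-algebra of skew polynomials in two variables,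
`R = k⟨x₁,x₂⟩/(x₁x₂ + x₂x₁)`. -/
abbrev OddPoly (k : Type*) [CommRing k] := RingQuot (OddRel k)

/-- The generators `x₁ = X k 0` and `x₂ = X k 1` of `R`. -/
noncomputable def X (k : Type*) [CommRing k] (i : Fin 2) : OddPoly k :=
  RingQuot.mkAlgHom k (OddRel k) (FreeAlgebra.ι k i)

/-!
Write `z ∈ R` as `∑ c_m x₁^{m₀} x₂^{m₁}` (not necessarily uniquely: no basis of `R` is needed).
The representation `x₁ ↦ s σ_z`, `x₂ ↦ t σ_x` of `R` on `k[s,t]²` sends `x₁^a x₂^b` to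
`s^a t^b σ_z^a σ_x^b`, so the coefficient of `s^a t^b` in an entry of the image of `z` is `c_(a,b)`
times the same entry of `σ_z^a σ_x^b`. Comparing `(0,1)` entries of the images of `x₁ z = z x₁` and
`x₂ z = z x₂` gives `2 c_m = 0` unless `m₀` and `m₁` are both even, so a central `z` is a polynomial
in `x₁²` and `x₂²`; these are central because `x₁` and `x₂` anticommute.
-/

theorem commute_sq_of_mul_add_mul_eq_zero {A : Type*} [Ring A] {a b : A}
    (h : a * b + b * a = 0) : Commute (a ^ 2) b := by
  have hab : a * b = -(b * a) := eq_neg_of_add_eq_zero_left h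
  have hba : b * a = -(a * b) := eq_neg_of_add_eq_zero_right h
  calc a ^ 2 * b = a * (a * b) := by rw [sq, mul_assoc]
    _ = a * -(b * a) := by rw [hab]
    _ = -(a * b) * a := by rw [mul_neg, neg_mul, mul_assoc]
    _ = b * a ^ 2 := by rw [← hba, sq, mul_assoc]

namespace OddPoly

variable {k : Type*} [CommRing k]

theorem X_zero_mul_X_one_add_X_one_mul_X_zero : X k 0 * X k 1 + X k 1 * X k 0 = 0 := by
  simpa [X] using RingQuot.mkAlgHom_rel k (OddRel.anticomm (k := k))

theorem X_one_mul_X_zero_pow (a : ℕ) :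
    X k 1 * X k 0 ^ a = (-1 : k) ^ a • (X k 0 ^ a * X k 1) := by
  induction a with
  | zero => simp
  | succ a ih =>
    have hba : X k 1 * X k 0 = (-1 : k) • (X k 0 * X k 1) :=
      (eq_neg_of_add_eq_zero_right X_zero_mul_X_one_add_X_one_mul_X_zero).trans
        (neg_one_smul k _).symm
    rw [pow_succ, ← mul_assoc, ih, smul_mul_assoc, mul_assoc, hba, mul_smul_comm, smul_smul,
      ← mul_assoc, pow_succ]

theorem commute_X_sq_X (i j : Fin 2) : Commute (X k i ^ 2) (X k j) := by
  fin_cases i <;> fin_cases j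
  · exact (Commute.refl _).pow_left 2
  · exact commute_sq_of_mul_add_mul_eq_zero X_zero_mul_X_one_add_X_one_mul_X_zero
  · exact commute_sq_of_mul_add_mul_eq_zero
      ((add_comm _ _).trans X_zero_mul_X_one_add_X_one_mul_X_zero)
  · exact (Commute.refl _).pow_left 2

theorem adjoin_range_X : Algebra.adjoin k (Set.range (X k)) = ⊤ := by
  rw [show Set.range (X k) = RingQuot.mkAlgHom k (OddRel k) '' Set.range (FreeAlgebra.ι k) by
      rw [← Set.range_comp]; rfl,
    ← AlgHom.map_adjoin, FreeAlgebra.adjoin_range_ι, Algebra.map_top,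
    (AlgHom.range_eq_top _).2 (RingQuot.mkAlgHom_surjective k (OddRel k))]

theorem mem_center_of_forall_commute_X {z : OddPoly k} (h : ∀ i, Commute z (X k i)) :
    z ∈ Subalgebra.center k (OddPoly k) := by
  refine Subalgebra.mem_center_iff.2 fun b => ?_
  have hb : b ∈ Algebra.adjoin k (Set.range (X k)) := by
    rw [adjoin_range_X]; exact Algebra.mem_top
  refine (Algebra.commute_of_mem_adjoin_of_forall_mem_commute hb ?_).eq.symm
  rintro _ ⟨i, rfl⟩
  exact h i

variable (k) in
noncomputable def monomial (m : Fin 2 →₀ ℕ) : OddPoly k := X k 0 ^ m 0 * X k 1 ^ m 1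

theorem X_zero_mul_monomial (m : Fin 2 →₀ ℕ) :
    X k 0 * monomial k m = monomial k (Finsupp.single 0 1 + m) := by
  simp [monomial, add_comm 1, pow_succ', mul_assoc]

theorem X_one_mul_monomial (m : Fin 2 →₀ ℕ) :
    X k 1 * monomial k m = (-1 : k) ^ m 0 • monomial k (Finsupp.single 1 1 + m) := by
  simp [monomial, ← mul_assoc, X_one_mul_X_zero_pow, add_comm 1, pow_succ']

theorem span_range_monomial : Submodule.span k (Set.range (monomial k)) = ⊤ := by
  set S := Submodule.span k (Set.range (monomial k))
  have hX (i : Fin 2) : S ≤ S.comap (LinearMap.mulLeft k (X k i)) := by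
    refine Submodule.span_le.2 ?_
    rintro _ ⟨m, rfl⟩
    fin_cases i
    · exact Submodule.subset_span ⟨_, (X_zero_mul_monomial m).symm⟩
    · show X k 1 * monomial k m ∈ S
      rw [X_one_mul_monomial]
      exact S.smul_mem _ (Submodule.subset_span ⟨_, rfl⟩)
  have hmul (z : OddPoly k) : ∀ w ∈ S, z * w ∈ S := by
    have hz : z ∈ Algebra.adjoin k (Set.range (X k)) := by
      rw [adjoin_range_X]; exact Algebra.mem_top
    induction hz using Algebra.adjoin_induction with
    | mem x hx => obtain ⟨i, rfl⟩ := hx; exact hX i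
    | algebraMap r => intro w hw; rw [← Algebra.smul_def]; exact S.smul_mem r hw
    | add x y _ _ hx hy => intro w hw; rw [add_mul]; exact S.add_mem (hx w hw) (hy w hw)
    | mul x y _ _ hx hy => intro w hw; rw [mul_assoc]; exact hx _ (hy w hw)
  refine eq_top_iff.2 fun z _ => ?_
  simpa using hmul z 1 (Submodule.subset_span ⟨0, by simp [monomial]⟩)

theorem exists_sum_smul_monomial (z : OddPoly k) :
    ∃ c : (Fin 2 →₀ ℕ) →₀ k, (c.sum fun m r => r • monomial k m) = z :=
  Finsupp.mem_span_range_iff_exists_finsupp.1 (by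
    rw [span_range_monomial]; exact Submodule.mem_top)

def pauliZ : Matrix (Fin 2) (Fin 2) k := Matrix.diagonal ![1, -1]

def pauliX : Matrix (Fin 2) (Fin 2) k := !![0, 1; 1, 0]

theorem pauliZ_mul_pauliX_add_pauliX_mul_pauliZ :
    (pauliZ * pauliX + pauliX * pauliZ : Matrix (Fin 2) (Fin 2) k) = 0 := by
  ext i j
  simp only [Matrix.add_apply, Matrix.mul_apply, Fin.sum_univ_two]
  fin_cases i <;> fin_cases j <;> simp [pauliZ, pauliX]

theorem pauliX_sq : (pauliX ^ 2 : Matrix (Fin 2) (Fin 2) k) = 1 := by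
  ext i j; fin_cases i <;> fin_cases j <;> simp [pauliX, sq]

theorem pauliX_pow_of_even {b : ℕ} (hb : Even b) :
    (pauliX ^ b : Matrix (Fin 2) (Fin 2) k) = 1 := by
  obtain ⟨n, rfl⟩ := hb
  rw [← two_mul, pow_mul, pauliX_sq, one_pow]

theorem pauliX_pow_of_odd {b : ℕ} (hb : Odd b) :
    (pauliX ^ b : Matrix (Fin 2) (Fin 2) k) = pauliX := by
  obtain ⟨n, rfl⟩ := hb
  rw [pow_succ, pauliX_pow_of_even (even_two_mul n), one_mul]

theorem pauliZ_pow_mul_apply (a : ℕ) (N : Matrix (Fin 2) (Fin 2) k) (i j : Fin 2) :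
    (pauliZ ^ a * N : Matrix (Fin 2) (Fin 2) k) i j = ![1, -1] i ^ a * N i j := by
  simp [pauliZ, Matrix.diagonal_pow, Matrix.diagonal_mul]

variable (k) in
noncomputable def matrixRepGen (i : Fin 2) : Matrix (Fin 2) (Fin 2) (MvPolynomial (Fin 2) k) :=
  (MvPolynomial.X i : MvPolynomial (Fin 2) k) •
    (algebraMap k (MvPolynomial (Fin 2) k)).mapMatrix (![pauliZ, pauliX] i)

variable (k) in
noncomputable def matrixRep :
    OddPoly k →ₐ[k] Matrix (Fin 2) (Fin 2) (MvPolynomial (Fin 2) k) :=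
  RingQuot.liftAlgHom k ⟨FreeAlgebra.lift k (matrixRepGen k), by
    rintro _ _ ⟨⟩
    simp only [map_add, map_mul, FreeAlgebra.lift_ι_apply, map_zero, matrixRepGen]
    rw [smul_mul_smul_comm, smul_mul_smul_comm,
      mul_comm (MvPolynomial.X 1 : MvPolynomial (Fin 2) k), ← smul_add, ← map_mul, ← map_mul,
      ← map_add]
    simp [pauliZ_mul_pauliX_add_pauliX_mul_pauliZ]⟩

theorem matrixRep_X (i : Fin 2) : matrixRep k (X k i) = matrixRepGen k i := by
  rw [X, matrixRep, RingQuot.liftAlgHom_mkAlgHom_apply, FreeAlgebra.lift_ι_apply]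

theorem matrixRep_monomial (m : Fin 2 →₀ ℕ) :
    matrixRep k (monomial k m) =
      (pauliZ ^ m 0 * pauliX ^ m 1 : Matrix (Fin 2) (Fin 2) k).map (MvPolynomial.monomial m) := by
  have hm : MvPolynomial.monomial m (1 : k) =
      MvPolynomial.X 0 ^ m 0 * MvPolynomial.X 1 ^ m 1 := by
    simp [MvPolynomial.monomial_eq, Finsupp.prod_fintype, Fin.prod_univ_two]
  rw [monomial, map_mul, map_pow, map_pow, matrixRep_X, matrixRep_X, matrixRepGen, matrixRepGen,
    smul_pow, smul_pow, smul_mul_smul_comm, ← map_pow, ← map_pow, ← map_mul, ← hm]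
  ext i j : 1
  rw [Matrix.smul_apply, RingHom.mapMatrix_apply, Matrix.map_apply, Matrix.map_apply,
    smul_eq_mul, MvPolynomial.algebraMap_eq, mul_comm, MvPolynomial.C_mul_monomial, mul_one]
  rfl

theorem coeff_matrixRep_sum (c : (Fin 2 →₀ ℕ) →₀ k) (q : Fin 2 →₀ ℕ) (i j : Fin 2) :
    (matrixRep k (c.sum fun m r => r • monomial k m) i j).coeff q =
      c q * (pauliZ ^ q 0 * pauliX ^ q 1 : Matrix (Fin 2) (Fin 2) k) i j := by
  rw [map_finsuppSum, Finsupp.sum, Matrix.sum_apply, MvPolynomial.coeff_sum,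
    Finset.sum_eq_single q]
  · simp [matrixRep_monomial]
  · intro m _ hmq
    simp [matrixRep_monomial, MvPolynomial.coeff_monomial, hmq]
  · intro hq
    simp [Finsupp.notMem_support_iff.1 hq]

theorem two_mul_coeff_eq_zero_of_commute_X_zero {c : (Fin 2 →₀ ℕ) →₀ k}
    (hz : Commute (c.sum fun m r => r • monomial k m) (X k 0)) {q : Fin 2 →₀ ℕ}
    (hq : Odd (q 1)) : 2 * c q = 0 := by
  set M := matrixRep k (c.sum fun m r => r • monomial k m)
  have hM : M * matrixRepGen k 0 = matrixRepGen k 0 * M := by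
    simpa [M, matrixRep_X] using congrArg (matrixRep k) hz.eq
  have h01 : -(MvPolynomial.X 0 * M 0 1) = MvPolynomial.X 0 * M 0 1 := by
    simpa [matrixRepGen, pauliZ, Matrix.mul_apply, Fin.sum_univ_two, mul_comm] using
      congrFun (congrFun hM 0) 1
  have h := congrArg (MvPolynomial.coeff (Finsupp.single 0 1 + q)) h01
  rw [MvPolynomial.coeff_neg, MvPolynomial.coeff_X_mul, coeff_matrixRep_sum,
    pauliZ_pow_mul_apply, pauliX_pow_of_odd hq] at h
  simp [pauliX] at h
  linear_combination -h

theorem two_mul_coeff_eq_zero_of_commute_X_one {c : (Fin 2 →₀ ℕ) →₀ k}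
    (hz : Commute (c.sum fun m r => r • monomial k m) (X k 1)) {q : Fin 2 →₀ ℕ}
    (hq₀ : Odd (q 0)) (hq₁ : Even (q 1)) : 2 * c q = 0 := by
  set M := matrixRep k (c.sum fun m r => r • monomial k m)
  have hM : M * matrixRepGen k 1 = matrixRepGen k 1 * M := by
    simpa [M, matrixRep_X] using congrArg (matrixRep k) hz.eq
  have h01 : MvPolynomial.X 1 * M 0 0 = MvPolynomial.X 1 * M 1 1 := by
    simpa [matrixRepGen, pauliX, Matrix.mul_apply, Fin.sum_univ_two, mul_comm] using
      congrFun (congrFun hM 0) 1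
  have h := congrArg (MvPolynomial.coeff (Finsupp.single 1 1 + q)) h01
  rw [MvPolynomial.coeff_X_mul, MvPolynomial.coeff_X_mul, coeff_matrixRep_sum,
    coeff_matrixRep_sum, pauliX_pow_of_even hq₁, pauliZ_pow_mul_apply,
    pauliZ_pow_mul_apply] at h
  simp [hq₀.neg_one_pow] at h
  linear_combination h

theorem coeff_eq_zero_of_mem_center (h2 : ∀ a : k, 2 * a = 0 → a = 0)
    {c : (Fin 2 →₀ ℕ) →₀ k}
    (hz : (c.sum fun m r => r • monomial k m) ∈ Subalgebra.center k (OddPoly k))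
    {q : Fin 2 →₀ ℕ} (hq : ¬(Even (q 0) ∧ Even (q 1))) : c q = 0 := by
  have hcomm (i : Fin 2) : Commute (c.sum fun m r => r • monomial k m) (X k i) :=
    (Subalgebra.mem_center_iff.1 hz (X k i)).symm
  refine h2 _ ?_
  by_cases hq₁ : Even (q 1)
  · have hq₀ : Odd (q 0) := Nat.not_even_iff_odd.1 fun hq₀ => hq ⟨hq₀, hq₁⟩
    exact two_mul_coeff_eq_zero_of_commute_X_one (hcomm 1) hq₀ hq₁
  · exact two_mul_coeff_eq_zero_of_commute_X_zero (hcomm 0) (Nat.not_even_iff_odd.1 hq₁)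

theorem monomial_mem_adjoin_sq {m : Fin 2 →₀ ℕ} (h₀ : Even (m 0)) (h₁ : Even (m 1)) :
    monomial k m ∈ Algebra.adjoin k {X k 0 ^ 2, X k 1 ^ 2} := by
  obtain ⟨a, ha⟩ := h₀
  obtain ⟨b, hb⟩ := h₁
  rw [monomial, ha, hb, ← two_mul, ← two_mul, pow_mul, pow_mul]
  exact mul_mem (pow_mem (Algebra.subset_adjoin (by simp)) _)
    (pow_mem (Algebra.subset_adjoin (by simp)) _)

end OddPoly

/-- If `2` is a non-zero-divisor in `k`, the center of `R` equals the
`k`-subalgebra generated by `x₁²` and `x₂²`. -/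
theorem stmt9 (k : Type*) [CommRing k]
    (h2 : ∀ a : k, 2 * a = 0 → a = 0) :
    Subalgebra.center k (OddPoly k) =
      Algebra.adjoin k ({X k 0 ^ 2, X k 1 ^ 2} : Set (OddPoly k)) := by
  refine le_antisymm (fun z hz => ?_) ?_
  · obtain ⟨c, rfl⟩ := OddPoly.exists_sum_smul_monomial z
    refine Subalgebra.sum_mem _ fun m _ => ?_
    by_cases hm : Even (m 0) ∧ Even (m 1)
    · exact Subalgebra.smul_mem _ (OddPoly.monomial_mem_adjoin_sq hm.1 hm.2) _
    · simp only [OddPoly.coeff_eq_zero_of_mem_center h2 hz hm, zero_smul]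
      exact zero_mem _
  · rw [Algebra.adjoin_le_iff]
    rintro _ (rfl | rfl) <;>
      exact OddPoly.mem_center_of_forall_commute_X (OddPoly.commute_X_sq_X _)
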